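/- arXiv:1406.1440 — 3 statements merged into one kernel-verified Lean document; each statement's English description precedes it below -/
import Mathlib

section
/- For any real numbers a > 0 and z, the integral over s from 0 to infinity of (1/sqrt(2*pi*s)) * exp(-z^2/(2s)) * (a^2/2) * exp(-a^2 * s / 2) ds equals (a/2) * exp(-a*|z|). -/
/-!
Substituting `s = x ^ 2` and completing the square,
`z ^ 2 / (2 x ^ 2) + a ^ 2 x ^ 2 / 2 = (α x - β / x) ^ 2 + a |z|` with `α = a / √2`,
`β = |z| / √2`, reduces the mixture to `a ^ 2 / √(2π) · e^{-a|z|}` times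
`∫₀^∞ exp (-(α x - β / x) ^ 2) dx`. That integral is `√π / (2α)` (Cauchy–Schlömilch):
`u = α t - β / t` maps `(0, ∞)` bijectively onto `ℝ` with Jacobian `α + β / t ^ 2`, and
`t ↦ β / (α t)` preserves `(α t - β / t) ^ 2` while turning the `β / t ^ 2` part of the
Jacobian into `α`.
-/

open MeasureTheory Real Set

section

variable {E : Type*} [NormedAddCommGroup E] [NormedSpace ℝ E]

theorem integral_comp_sq_Ioi (g : ℝ → E) :
    ∫ x in Ioi 0, (2 * x) • g (x ^ 2) = ∫ y in Ioi 0, g y := by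
  rw [← integral_comp_rpow_Ioi_of_pos (g := g) two_pos]
  refine setIntegral_congr_fun measurableSet_Ioi fun x _ => ?_
  norm_num

theorem image_const_div_Ioi {c : ℝ} (hc : 0 < c) : (c / ·) '' Ioi 0 = Ioi 0 := by
  ext y
  constructor
  · rintro ⟨x, hx, rfl⟩
    exact div_pos hc hx
  · intro hy
    exact ⟨c / y, div_pos hc hy, div_div_cancel₀ hc.ne'⟩

theorem integral_comp_const_div_Ioi (g : ℝ → E) {c : ℝ} (hc : 0 < c) :
    ∫ x in Ioi 0, (c / x ^ 2) • g (c / x) = ∫ y in Ioi 0, g y := by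
  have hderiv : ∀ x ∈ Ioi (0 : ℝ), HasDerivWithinAt (c / ·) (-(c / x ^ 2)) (Ioi 0) x := by
    intro x hx
    simpa [div_eq_mul_inv] using ((hasDerivAt_inv (ne_of_gt hx)).const_mul c).hasDerivWithinAt
  have hinj : InjOn (c / ·) (Ioi (0 : ℝ)) := fun x _ y _ h => by
    simp only at h
    rwa [div_eq_mul_inv, div_eq_mul_inv, mul_right_inj' hc.ne', inv_inj] at h
  have := integral_image_eq_integral_abs_deriv_smul measurableSet_Ioi hderiv hinj g
  rw [image_const_div_Ioi hc] at this
  rw [this]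
  refine setIntegral_congr_fun measurableSet_Ioi fun x hx => ?_
  rw [abs_neg, abs_of_pos (div_pos hc (pow_pos hx 2))]

variable {α β : ℝ}

theorem hasDerivAt_mul_sub_div {t : ℝ} (ht : t ≠ 0) :
    HasDerivAt (fun t => α * t - β / t) (α + β / t ^ 2) t := by
  simp only [div_eq_mul_inv]
  exact (((hasDerivAt_id' t).const_mul α).sub ((hasDerivAt_inv ht).const_mul β)).congr_deriv
    (by ring)

theorem strictMonoOn_mul_sub_div (hα : 0 < α) (hβ : 0 ≤ β) :
    StrictMonoOn (fun t => α * t - β / t) (Ioi 0) := by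
  intro s hs t _ hst
  have : β / t ≤ β / s := div_le_div_of_nonneg_left hβ hs hst.le
  have : α * s < α * t := mul_lt_mul_of_pos_left hst hα
  simp only
  linarith

theorem image_mul_sub_div_Ioi (hα : 0 < α) (hβ : 0 < β) :
    (fun t => α * t - β / t) '' Ioi 0 = univ := by
  refine eq_univ_of_forall fun u => ?_
  -- the positive root of `α t ^ 2 - u t - β = 0`
  set D := u ^ 2 + 4 * α * β
  have hD : √D ^ 2 = D := sq_sqrt (by positivity)
  have hu : |u| < √D := by
    rw [← sqrt_sq_eq_abs]
    exact sqrt_lt_sqrt (sq_nonneg u) (by simp only [D]; nlinarith)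
  set t := (u + √D) / (2 * α)
  have ht : 0 < t := div_pos (by linarith [neg_abs_le u]) (by positivity)
  have hroot : α * t ^ 2 - u * t - β = 0 := by
    simp only [t]
    field_simp
    nlinarith [hD]
  refine ⟨t, ht, ?_⟩
  field_simp
  linarith

theorem integral_comp_mul_sub_div_Ioi (g : ℝ → E) (hα : 0 < α) (hβ : 0 < β) :
    ∫ t in Ioi 0, (α + β / t ^ 2) • g (α * t - β / t) = ∫ u, g u := by
  conv_rhs => rw [← setIntegral_univ, ← image_mul_sub_div_Ioi hα hβ]
  rw [integral_image_eq_integral_abs_deriv_smul measurableSet_Ioi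
      (fun t ht => (hasDerivAt_mul_sub_div (ne_of_gt ht)).hasDerivWithinAt)
      (strictMonoOn_mul_sub_div hα hβ.le).injOn]
  refine setIntegral_congr_fun measurableSet_Ioi fun t (ht : 0 < t) => ?_
  rw [abs_of_pos (by positivity)]

theorem integrableOn_comp_mul_sub_div_Ioi (g : ℝ → E) (hα : 0 < α) (hβ : 0 < β) :
    IntegrableOn (fun t => (α + β / t ^ 2) • g (α * t - β / t)) (Ioi 0) ↔ Integrable g := by
  rw [← integrableOn_univ, ← image_mul_sub_div_Ioi hα hβ,
    integrableOn_image_iff_integrableOn_abs_deriv_smul measurableSet_Ioi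
      (fun t ht => (hasDerivAt_mul_sub_div (ne_of_gt ht)).hasDerivWithinAt)
      (strictMonoOn_mul_sub_div hα hβ.le).injOn]
  refine integrableOn_congr_fun (fun t (ht : 0 < t) => ?_) measurableSet_Ioi
  rw [abs_of_pos (by positivity)]

theorem integral_exp_neg_sq_mul_sub_div_of_pos (hα : 0 < α) (hβ : 0 < β) :
    ∫ t in Ioi 0, exp (-(α * t - β / t) ^ 2) = √π / (2 * α) := by
  set f := fun t => exp (-(α * t - β / t) ^ 2)
  have hgauss_int : Integrable fun u : ℝ => exp (-u ^ 2) := by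
    simpa using integrable_exp_neg_mul_sq one_pos
  have hgauss : ∫ u, exp (-u ^ 2) = √π := by
    simpa using integral_gaussian 1
  have hweighted_int : IntegrableOn (fun t => (α + β / t ^ 2) * f t) (Ioi 0) :=
    (integrableOn_comp_mul_sub_div_Ioi _ hα hβ).2 hgauss_int
  have hweighted : ∫ t in Ioi 0, (α + β / t ^ 2) * f t = √π :=
    (integral_comp_mul_sub_div_Ioi _ hα hβ).trans hgauss
  have hf_int : IntegrableOn f (Ioi 0) := by
    refine (hweighted_int.div_const α).mono' (by fun_prop) ?_
    filter_upwards [ae_restrict_mem measurableSet_Ioi] with t (ht : 0 < t)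
    rw [norm_of_nonneg (exp_pos _).le, le_div_iff₀ hα]
    linarith [show 0 ≤ β / t ^ 2 * f t by positivity]
  have hreflect : ∫ t in Ioi 0, (β / t ^ 2) * f t = α * ∫ t in Ioi 0, f t := by
    rw [← integral_comp_const_div_Ioi f (div_pos hβ hα), ← integral_const_mul]
    refine setIntegral_congr_fun measurableSet_Ioi fun t (ht : 0 < t) => ?_
    have hsign : α * (β / α / t) - β / (β / α / t) = -(α * t - β / t) := by
      field_simp
      ring
    simp only [f, smul_eq_mul, hsign, neg_sq]
    field_simp
  have hsplit : ∫ t in Ioi 0, (β / t ^ 2) * f t = √π - α * ∫ t in Ioi 0, f t := by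
    rw [← hweighted, ← integral_const_mul, ← integral_sub hweighted_int (hf_int.const_mul α)]
    congr with t
    ring
  rw [eq_div_iff (by positivity)]
  linarith

theorem integral_exp_neg_sq_mul_sub_div (hα : 0 < α) (hβ : 0 ≤ β) :
    ∫ t in Ioi 0, exp (-(α * t - β / t) ^ 2) = √π / (2 * α) := by
  obtain rfl | hβ := hβ.eq_or_lt
  · simp_rw [zero_div, sub_zero, mul_pow, ← neg_mul]
    rw [integral_gaussian_Ioi, sqrt_div pi_pos.le, sqrt_sq hα.le]
    ring
  · exact integral_exp_neg_sq_mul_sub_div_of_pos hα hβ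

end

theorem laplace_scale_mixture (a z : ℝ) (ha : 0 < a) :
    ∫ s in Set.Ioi (0 : ℝ),
        (1 / Real.sqrt (2 * Real.pi * s)) * Real.exp (-(z ^ 2) / (2 * s)) *
          (a ^ 2 / 2) * Real.exp (-(a ^ 2) * s / 2)
      = (a / 2) * Real.exp (-(a * |z|)) := by
  have hintegrand : ∀ x ∈ Ioi (0 : ℝ),
      (2 * x) • ((1 / √(2 * π * x ^ 2)) * exp (-(z ^ 2) / (2 * x ^ 2)) *
          (a ^ 2 / 2) * exp (-(a ^ 2) * x ^ 2 / 2))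
        = a ^ 2 / √(2 * π) * exp (-(a * |z|)) * exp (-(a / √2 * x - |z| / √2 / x) ^ 2) := by
    intro x (hx : 0 < x)
    have hexponent : -(z ^ 2) / (2 * x ^ 2) + -(a ^ 2) * x ^ 2 / 2
        = -(a * |z|) + -(a / √2 * x - |z| / √2 / x) ^ 2 := by
      field_simp
      rw [← sq_abs z]
      ring_nf
      rw [sq_sqrt zero_le_two]
      ring
    rw [mul_assoc (a ^ 2 / _), ← exp_add, ← hexponent, exp_add, smul_eq_mul,
      sqrt_mul (by positivity) (x ^ 2), sqrt_sq hx.le]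
    field_simp
  rw [← integral_comp_sq_Ioi, setIntegral_congr_fun measurableSet_Ioi hintegrand,
    integral_const_mul, integral_exp_neg_sq_mul_sub_div (by positivity) (by positivity),
    sqrt_mul zero_le_two]
  field_simp
end

section
/- Let X be an m-by-n real matrix with singular value decomposition. For any factorization X = M * N^T with M of size m-by-K and N of size n-by-K (any positive integer K), the nuclear norm of X satisfies ||X||_* <= (||M||_F^2 + ||N||_F^2)/2. -/
open Matrix

/-- The nuclear norm of a real matrix: the sum of its singular values,
i.e. the sum of the square roots of the eigenvalues of `Xᵀ * X`. -/
noncomputable def nuclearNorm {m n : ℕ} (X : Matrix (Fin m) (Fin n) ℝ) : ℝ :=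
  ∑ j, Real.sqrt ((show (Xᵀ * X).IsHermitian by
    simpa [Matrix.conjTranspose_eq_transpose_of_trivial] using
      Matrix.isHermitian_conjTranspose_mul_self X).eigenvalues j)

/-!
With `Xᵀ X vⱼ = λⱼ vⱼ` an orthonormal eigenbasis, the vectors `uⱼ = X vⱼ / √λⱼ` with `λⱼ ≠ 0` are
orthonormal and `√λⱼ = uⱼ ⬝ X vⱼ = (Mᵀ uⱼ) ⬝ (Nᵀ vⱼ) ≤ (|Mᵀ uⱼ|² + |Nᵀ vⱼ|²) / 2`. Summing over `j`,
Bessel's inequality applied to the columns of `M` and of `N` bounds the two sums by `‖M‖_F²` and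
`‖N‖_F²`.
-/

open scoped RealInnerProductSpace

variable {m n κ : Type*} [Fintype m] [Fintype n] [Fintype κ]

theorem dotProduct_le_add_div_two (a b : n → ℝ) : a ⬝ᵥ b ≤ (a ⬝ᵥ a + b ⬝ᵥ b) / 2 := by
  simp only [dotProduct, ← Finset.sum_add_distrib, Finset.sum_div]
  exact Finset.sum_le_sum fun i _ => by nlinarith [sq_nonneg (a i - b i)]

theorem real_inner_eq_dotProduct (x y : EuclideanSpace ℝ n) : ⟪x, y⟫ = ⇑x ⬝ᵥ ⇑y := by
  simp [EuclideanSpace.inner_eq_star_dotProduct, dotProduct_comm]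

theorem Orthonormal.sum_dotProduct_transpose_mulVec_le {ι : Type*} [Fintype ι]
    {u : ι → EuclideanSpace ℝ m} (hu : Orthonormal ℝ u) (M : Matrix m κ ℝ) :
    ∑ i, (Mᵀ *ᵥ ⇑(u i)) ⬝ᵥ (Mᵀ *ᵥ ⇑(u i)) ≤ ∑ a, ∑ k, M a k ^ 2 := by
  set c : κ → EuclideanSpace ℝ m := fun k => WithLp.toLp 2 (Mᵀ k)
  have hentry : ∀ i k, (Mᵀ *ᵥ ⇑(u i)) k = ⟪u i, c k⟫ := fun i k => by
    rw [real_inner_eq_dotProduct, dotProduct_comm]; rfl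
  calc ∑ i, (Mᵀ *ᵥ ⇑(u i)) ⬝ᵥ (Mᵀ *ᵥ ⇑(u i)) = ∑ k, ∑ i, ‖⟪u i, c k⟫‖ ^ 2 := by
        rw [Finset.sum_comm]
        simp only [dotProduct, hentry, Real.norm_eq_abs, sq_abs, ← sq]
    _ ≤ ∑ k, ‖c k‖ ^ 2 := Finset.sum_le_sum fun k _ => hu.sum_inner_products_le (c k)
    _ = ∑ a, ∑ k, M a k ^ 2 := by
        simp only [c, EuclideanSpace.norm_sq_eq, Real.norm_eq_abs, sq_abs, transpose_apply]
        exact Finset.sum_comm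

section SingularVectors

variable [DecidableEq n] {X : Matrix m n ℝ} (hH : (Xᵀ * X).IsHermitian)

theorem dotProduct_mulVec_eigenvectorBasis (i j : n) :
    (X *ᵥ ⇑(hH.eigenvectorBasis i)) ⬝ᵥ (X *ᵥ ⇑(hH.eigenvectorBasis j)) =
      if i = j then hH.eigenvalues j else 0 := by
  rw [dotProduct_comm, dotProduct_mulVec, ← mulVec_transpose, mulVec_mulVec,
    hH.mulVec_eigenvectorBasis, smul_dotProduct, ← real_inner_eq_dotProduct,
    orthonormal_iff_ite.mp hH.eigenvectorBasis.orthonormal j i]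
  split_ifs <;> simp_all

theorem eigenvalues_transpose_mul_self_nonneg (j : n) : 0 ≤ hH.eigenvalues j := by
  have h := dotProduct_mulVec_eigenvectorBasis hH j j
  rw [if_pos rfl] at h
  exact h ▸ Finset.sum_nonneg fun a _ => mul_self_nonneg _

/-- For a zero eigenvalue this is the zero vector, since `(√0)⁻¹ = 0`. -/
noncomputable def leftSingularVector (j : n) : EuclideanSpace ℝ m :=
  WithLp.toLp 2 ((√(hH.eigenvalues j))⁻¹ • (X *ᵥ ⇑(hH.eigenvectorBasis j)))

theorem leftSingularVector_eq_zero {j : n} (hj : hH.eigenvalues j = 0) :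
    leftSingularVector hH j = 0 := by
  simp [leftSingularVector, hj]

theorem orthonormal_leftSingularVector :
    Orthonormal ℝ fun j : {j // hH.eigenvalues j ≠ 0} => leftSingularVector hH j := by
  rw [orthonormal_iff_ite]
  rintro ⟨i, hi⟩ ⟨j, hj⟩
  rw [real_inner_eq_dotProduct]
  simp only [leftSingularVector, smul_dotProduct, dotProduct_smul,
    dotProduct_mulVec_eigenvectorBasis, Subtype.mk.injEq, smul_eq_mul]
  split_ifs with h
  · subst h
    have hpos := (eigenvalues_transpose_mul_self_nonneg hH i).lt_of_ne' hi
    field_simp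
    rw [Real.sq_sqrt hpos.le]
  · simp

theorem leftSingularVector_dotProduct_mulVec (j : n) :
    ⇑(leftSingularVector hH j) ⬝ᵥ (X *ᵥ ⇑(hH.eigenvectorBasis j)) = √(hH.eigenvalues j) := by
  rw [leftSingularVector, WithLp.ofLp_toLp, smul_dotProduct, dotProduct_mulVec_eigenvectorBasis,
    if_pos rfl, smul_eq_mul, inv_mul_eq_div, Real.div_sqrt]

theorem sum_dotProduct_transpose_mulVec_leftSingularVector_le (M : Matrix m κ ℝ) :
    ∑ j, (Mᵀ *ᵥ ⇑(leftSingularVector hH j)) ⬝ᵥ (Mᵀ *ᵥ ⇑(leftSingularVector hH j)) ≤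
      ∑ a, ∑ k, M a k ^ 2 := by
  classical
  set f := fun j => (Mᵀ *ᵥ ⇑(leftSingularVector hH j)) ⬝ᵥ (Mᵀ *ᵥ ⇑(leftSingularVector hH j))
  calc ∑ j, f j = ∑ j with hH.eigenvalues j ≠ 0, f j := by
        rw [Finset.sum_filter_of_ne]
        intro j _ hfj hj
        simp [f, leftSingularVector_eq_zero hH hj] at hfj
    _ = ∑ j : {j // hH.eigenvalues j ≠ 0}, f j := Finset.sum_subtype _ (by simp) f
    _ ≤ ∑ a, ∑ k, M a k ^ 2 :=
        (orthonormal_leftSingularVector hH).sum_dotProduct_transpose_mulVec_le M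

theorem sum_sqrt_eigenvalues_le_of_eq_mul_transpose {M : Matrix m κ ℝ} {N : Matrix n κ ℝ}
    (hX : X = M * Nᵀ) :
    ∑ j, √(hH.eigenvalues j) ≤ ((∑ a, ∑ k, M a k ^ 2) + ∑ b, ∑ k, N b k ^ 2) / 2 := by
  subst hX
  set u := leftSingularVector hH
  set v := hH.eigenvectorBasis
  have hsplit (j : n) : √(hH.eigenvalues j) = (Mᵀ *ᵥ ⇑(u j)) ⬝ᵥ (Nᵀ *ᵥ ⇑(v j)) := by
    rw [← leftSingularVector_dotProduct_mulVec, ← mulVec_mulVec, dotProduct_mulVec,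
      mulVec_transpose, mulVec_transpose]
  calc ∑ j, √(hH.eigenvalues j) = ∑ j, (Mᵀ *ᵥ ⇑(u j)) ⬝ᵥ (Nᵀ *ᵥ ⇑(v j)) :=
        Finset.sum_congr rfl fun j _ => hsplit j
    _ ≤ ∑ j, ((Mᵀ *ᵥ ⇑(u j)) ⬝ᵥ (Mᵀ *ᵥ ⇑(u j)) + (Nᵀ *ᵥ ⇑(v j)) ⬝ᵥ (Nᵀ *ᵥ ⇑(v j))) / 2 :=
        Finset.sum_le_sum fun j _ => dotProduct_le_add_div_two _ _
    _ ≤ ((∑ a, ∑ k, M a k ^ 2) + ∑ b, ∑ k, N b k ^ 2) / 2 := by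
        rw [← Finset.sum_div, Finset.sum_add_distrib]
        gcongr (?_ + ?_) / 2
        · exact sum_dotProduct_transpose_mulVec_leftSingularVector_le hH M
        · exact v.orthonormal.sum_dotProduct_transpose_mulVec_le N

end SingularVectors

theorem nuclearNorm_le_of_factorization_general (m n K : ℕ)
    (X : Matrix (Fin m) (Fin n) ℝ)
    (M : Matrix (Fin m) (Fin K) ℝ) (N : Matrix (Fin n) (Fin K) ℝ)
    (hX : X = M * Nᵀ) :
    nuclearNorm X ≤ ((∑ i, ∑ k, (M i k) ^ 2) + (∑ j, ∑ k, (N j k) ^ 2)) / 2 :=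
  sum_sqrt_eigenvalues_le_of_eq_mul_transpose _ hX

theorem nuclearNorm_le_of_factorization (m n K : ℕ) (hK : 0 < K)
    (X : Matrix (Fin m) (Fin n) ℝ)
    (M : Matrix (Fin m) (Fin K) ℝ) (N : Matrix (Fin n) (Fin K) ℝ)
    (hX : X = M * Nᵀ) :
    nuclearNorm X ≤ ((∑ i, ∑ k, (M i k) ^ 2) + (∑ j, ∑ k, (N j k) ^ 2)) / 2 :=
  nuclearNorm_le_of_factorization_general m n K X M N hX
end

section
/- For c >= 0 and beta > 0, the integral over x in (0, infinity) of x^(-1/2) * exp(-c/(2x) - beta^2 * x/2) dx equals sqrt(2*pi) / beta * exp(-beta * sqrt(c)). -/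
/-!
Substitute `u = β √x - √c / √x`, an increasing map of `(0, ∞)` onto `ℝ` with derivative
`β / (2 √x) + √c / (2 x √x)`. Since `-u² / 2 = β √c - c / (2x) - β² x / 2`, the Gaussian integral
`√(2π)` becomes `e^{β √c}` times the integral of that weight against `exp (-c / (2x) - β² x / 2)`.
The inversion `x ↦ c / (β² x)` fixes this exponential, reverses the sign of `u`, and exchanges the
two terms of the weight, so each term contributes half. When `c = 0` the second term vanishes and
`u` only covers `(0, ∞)`, which carries half of the Gaussian mass.
-/

open MeasureTheory Set Real

theorem integral_Ioi_eq_integral_Ioi_comp_div {E : Type*} [NormedAddCommGroup E] [NormedSpace ℝ E]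
    {a : ℝ} (ha : 0 < a) (g : ℝ → E) :
    ∫ x in Ioi 0, g x = ∫ y in Ioi 0, (a / y ^ 2) • g (a / y) := by
  have hderiv : ∀ y ∈ Ioi (0 : ℝ), HasDerivWithinAt (a / ·) (-(a / y ^ 2)) (Ioi 0) y := by
    intro y hy
    simp only [div_eq_mul_inv]
    exact ((hasDerivAt_inv (ne_of_gt hy)).const_mul a).hasDerivWithinAt.congr_deriv (by ring)
  have hinj : InjOn (a / ·) (Ioi (0 : ℝ)) := fun x _ y _ hxy => by
    simpa only [div_div_cancel₀ ha.ne'] using congrArg (a / ·) hxy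
  have himage : (a / ·) '' Ioi (0 : ℝ) = Ioi 0 := by
    refine Subset.antisymm (image_subset_iff.mpr fun y hy => div_pos ha hy) fun x hx => ?_
    exact ⟨a / x, div_pos ha hx, div_div_cancel₀ ha.ne'⟩
  rw [← himage, integral_image_eq_integral_abs_deriv_smul measurableSet_Ioi hderiv hinj, himage]
  refine setIntegral_congr_fun measurableSet_Ioi fun y hy => ?_
  rw [abs_neg, abs_of_pos (div_pos ha (pow_pos hy 2))]

theorem Integrable.mul_of_integrable_add_mul {α : Type*} [MeasurableSpace α] {μ : Measure α}
    {a b F : α → ℝ} (ha : Measurable a) (hb : Measurable b) (ha₀ : ∀ x, 0 ≤ a x)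
    (hb₀ : ∀ x, 0 ≤ b x) (h : Integrable (fun x => (a x + b x) * F x) μ) :
    Integrable (fun x => a x * F x) μ := by
  have hsplit : (fun x => a x * F x) = fun x => a x / (a x + b x) * ((a x + b x) * F x) := by
    funext x
    rcases (add_nonneg (ha₀ x) (hb₀ x)).eq_or_lt with hab | hab
    · have : a x = 0 := by linarith [ha₀ x, hb₀ x]
      simp [this]
    · field_simp
  rw [hsplit]
  refine h.bdd_mul (c := 1) (ha.div (ha.add hb)).aestronglyMeasurable (.of_forall fun x => ?_)
  rw [norm_of_nonneg (div_nonneg (ha₀ x) (add_nonneg (ha₀ x) (hb₀ x)))]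
  exact div_le_one_of_le₀ (le_add_of_nonneg_right (hb₀ x)) (add_nonneg (ha₀ x) (hb₀ x))

theorem integral_exp_neg_sq_div_two : ∫ u : ℝ, exp (-u ^ 2 / 2) = √(2 * π) := by
  simpa [neg_div, div_eq_inv_mul, div_inv_eq_mul, mul_comm π] using integral_gaussian (1 / 2)

theorem integrable_exp_neg_sq_div_two : Integrable fun u : ℝ => exp (-u ^ 2 / 2) := by
  simpa [neg_div, div_eq_inv_mul] using integrable_exp_neg_mul_sq (b := 1 / 2) (by norm_num)

noncomputable def cauchySchlomilch (β s x : ℝ) : ℝ := β * √x - s / √x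

theorem hasDerivAt_cauchySchlomilch (β s : ℝ) {x : ℝ} (hx : 0 < x) :
    HasDerivAt (cauchySchlomilch β s) (β / 2 * (√x)⁻¹ + s / 2 * (√x ^ 3)⁻¹) x := by
  have hsqrt : 0 < √x := sqrt_pos.mpr hx
  have h := ((hasDerivAt_sqrt hx.ne').const_mul β).sub
    (((hasDerivAt_sqrt hx.ne').inv hsqrt.ne').const_mul s)
  refine (h.congr_deriv ?_).congr_of_eventuallyEq (.of_forall fun y => ?_)
  · field_simp
    ring
  · simp [cauchySchlomilch, div_eq_mul_inv]

theorem cauchySchlomilch_sq {β s x : ℝ} (hx : 0 < x) :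
    cauchySchlomilch β s x ^ 2 = β ^ 2 * x - 2 * β * s + s ^ 2 / x := by
  have hsqrt : 0 < √x := sqrt_pos.mpr hx
  rw [cauchySchlomilch]
  field_simp
  rw [sq_sqrt hx.le]
  ring

section
variable {β s : ℝ}

theorem strictMonoOn_cauchySchlomilch (hβ : 0 < β) (hs : 0 ≤ s) :
    StrictMonoOn (cauchySchlomilch β s) (Ioi 0) := by
  intro x hx y hy hxy
  have hlt : √x < √y := sqrt_lt_sqrt (le_of_lt hx) hxy
  have hpos : 0 < √x := sqrt_pos.mpr hx
  have : s / √y ≤ s / √x := div_le_div_of_nonneg_left hs hpos hlt.le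
  unfold cauchySchlomilch
  nlinarith

theorem cauchySchlomilch_image_Ioi (hβ : 0 < β) (hs : 0 < s) :
    cauchySchlomilch β s '' Ioi 0 = univ := by
  refine eq_univ_of_forall fun v => ?_
  -- `t = √x` is the positive root of `β t ^ 2 - v t - s`
  set d := √(v ^ 2 + 4 * β * s)
  have hd : d ^ 2 = v ^ 2 + 4 * β * s := sq_sqrt (by positivity)
  have hvd : -v < d := by nlinarith [sqrt_nonneg (v ^ 2 + 4 * β * s)]
  set t := (v + d) / (2 * β)
  have ht : 0 < t := div_pos (by linarith) (by positivity)
  refine ⟨t ^ 2, pow_pos ht 2, ?_⟩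
  have hroot : β * t ^ 2 - v * t - s = 0 := by
    simp only [t]; field_simp; nlinarith
  rw [cauchySchlomilch, sqrt_sq ht.le]
  field_simp
  linarith

theorem cauchySchlomilch_zero_image_Ioi (hβ : 0 < β) :
    cauchySchlomilch β 0 '' Ioi 0 = Ioi 0 := by
  ext v
  simp only [cauchySchlomilch, zero_div, sub_zero, mem_image, mem_Ioi]
  constructor
  · rintro ⟨x, hx, rfl⟩
    exact mul_pos hβ (sqrt_pos.mpr hx)
  · intro hv
    refine ⟨(v / β) ^ 2, by positivity, ?_⟩
    rw [sqrt_sq (by positivity)]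
    field_simp

theorem cauchySchlomilch_div (hβ : 0 < β) (hs : 0 < s) {y : ℝ} (hy : 0 < y) :
    cauchySchlomilch β s ((s / β) ^ 2 / y) = -cauchySchlomilch β s y := by
  have hsqrt : 0 < √y := sqrt_pos.mpr hy
  rw [cauchySchlomilch, cauchySchlomilch, sqrt_div' _ hy.le, sqrt_sq (by positivity)]
  field_simp
  ring

theorem integral_image_cauchySchlomilch (hβ : 0 < β) (hs : 0 ≤ s) (f : ℝ → ℝ) :
    ∫ u in cauchySchlomilch β s '' Ioi 0, f u =
      ∫ x in Ioi 0, (β / 2 * (√x)⁻¹ + s / 2 * (√x ^ 3)⁻¹) * f (cauchySchlomilch β s x) := by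
  rw [integral_image_eq_integral_abs_deriv_smul measurableSet_Ioi
    (fun x hx => (hasDerivAt_cauchySchlomilch β s hx).hasDerivWithinAt)
    (strictMonoOn_cauchySchlomilch hβ hs).injOn]
  refine setIntegral_congr_fun measurableSet_Ioi fun x _ => ?_
  rw [smul_eq_mul, abs_of_nonneg (by positivity)]

theorem integrableOn_image_cauchySchlomilch_iff (hβ : 0 < β) (hs : 0 ≤ s) (f : ℝ → ℝ) :
    IntegrableOn f (cauchySchlomilch β s '' Ioi 0) ↔ IntegrableOn
      (fun x => (β / 2 * (√x)⁻¹ + s / 2 * (√x ^ 3)⁻¹) * f (cauchySchlomilch β s x)) (Ioi 0) := by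
  rw [integrableOn_image_iff_integrableOn_abs_deriv_smul measurableSet_Ioi
    (fun x hx => (hasDerivAt_cauchySchlomilch β s hx).hasDerivWithinAt)
    (strictMonoOn_cauchySchlomilch hβ hs).injOn]
  refine integrableOn_congr_fun (fun x _ => ?_) measurableSet_Ioi
  rw [smul_eq_mul, abs_of_nonneg (by positivity)]

theorem integral_cauchySchlomilch_reflect (hβ : 0 < β) (hs : 0 < s) {f : ℝ → ℝ}
    (hf : f.Even) :
    ∫ x in Ioi 0, s / 2 * (√x ^ 3)⁻¹ * f (cauchySchlomilch β s x) =
      ∫ x in Ioi 0, β / 2 * (√x)⁻¹ * f (cauchySchlomilch β s x) := by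
  rw [integral_Ioi_eq_integral_Ioi_comp_div (a := (s / β) ^ 2) (by positivity)]
  refine setIntegral_congr_fun measurableSet_Ioi fun y (hy : 0 < y) => ?_
  have hsqrt : 0 < √y := sqrt_pos.mpr hy
  rw [smul_eq_mul, cauchySchlomilch_div hβ hs hy, hf, sqrt_div' _ hy.le, sqrt_sq (by positivity)]
  field_simp
  rw [show √y ^ 4 = (√y ^ 2) ^ 2 by ring, sq_sqrt hy.le]

theorem integral_inv_sqrt_mul_comp_cauchySchlomilch (hβ : 0 < β) (hs : 0 ≤ s) {f : ℝ → ℝ}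
    (hf : Integrable f) (heven : f.Even) :
    ∫ x in Ioi 0, (√x)⁻¹ * f (cauchySchlomilch β s x) = (∫ u, f u) / β := by
  rcases hs.eq_or_lt with rfl | hs
  · have hhalf : ∫ u, f u = 2 * ∫ u in Ioi 0, f u := by
      rw [← integral_comp_abs]
      congr with u
      rcases abs_choice u with h | h <;> simp [h, heven u]
    have himage := integral_image_cauchySchlomilch hβ le_rfl f
    rw [cauchySchlomilch_zero_image_Ioi hβ] at himage
    simp only [zero_div, zero_mul, add_zero, mul_assoc, integral_const_mul] at himage
    rw [hhalf, himage]
    field_simp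
  · set F := fun x => f (cauchySchlomilch β s x)
    have hsum : IntegrableOn
        (fun x => (β / 2 * (√x)⁻¹ + s / 2 * (√x ^ 3)⁻¹) * F x) (Ioi 0) := by
      rw [← integrableOn_image_cauchySchlomilch_iff hβ hs.le, cauchySchlomilch_image_Ioi hβ hs]
      exact hf.integrableOn
    have hw : IntegrableOn (fun x => β / 2 * (√x)⁻¹ * F x) (Ioi 0) := by
      refine Integrable.mul_of_integrable_add_mul ?_ ?_ (fun x => ?_) (fun x => ?_) hsum <;>
        first | fun_prop | positivity
    have hv : IntegrableOn (fun x => s / 2 * (√x ^ 3)⁻¹ * F x) (Ioi 0) := by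
      simp only [add_comm (β / 2 * _)] at hsum
      refine Integrable.mul_of_integrable_add_mul ?_ ?_ (fun x => ?_) (fun x => ?_) hsum <;>
        first | fun_prop | positivity
    have htotal := integral_image_cauchySchlomilch hβ hs.le f
    rw [cauchySchlomilch_image_Ioi hβ hs, setIntegral_univ] at htotal
    simp only [add_mul] at htotal
    rw [htotal, integral_add hw hv, integral_cauchySchlomilch_reflect hβ hs heven]
    simp only [mul_assoc, integral_const_mul]
    field_simp
    ring

end

theorem park_casella_identity (c β : ℝ) (hc : 0 ≤ c) (hβ : 0 < β) :
    ∫ x in Set.Ioi (0 : ℝ), (Real.sqrt x)⁻¹ * Real.exp (-c / (2 * x) - β ^ 2 * x / 2)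
      = Real.sqrt (2 * Real.pi) / β * Real.exp (-(β * Real.sqrt c)) := by
  have hgauss := integral_inv_sqrt_mul_comp_cauchySchlomilch hβ (sqrt_nonneg c)
    integrable_exp_neg_sq_div_two (fun u => by simp only [even_two, Even.neg_pow])
  rw [integral_exp_neg_sq_div_two] at hgauss
  calc ∫ x in Ioi 0, (√x)⁻¹ * exp (-c / (2 * x) - β ^ 2 * x / 2)
      = ∫ x in Ioi 0, exp (-(β * √c)) * ((√x)⁻¹ * exp (-cauchySchlomilch β √c x ^ 2 / 2)) := by
        refine setIntegral_congr_fun measurableSet_Ioi fun x (hx : 0 < x) => ?_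
        rw [cauchySchlomilch_sq hx, sq_sqrt hc, mul_left_comm, ← exp_add]
        congr 2
        field_simp
        ring
    _ = √(2 * π) / β * exp (-(β * √c)) := by
        rw [integral_const_mul, hgauss, mul_comm]
end
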